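/- Let (Ω, μ) be a probability space, let T and S be finite sets, let τ : S → T with every fiber τ⁻¹(t) of cardinality N > 0, let λ : T → Ω → ℝ and π : S → Ω → ℝ be families of integrable random variables, and let c ∈ ℝ. Let D ⊆ (T → ℝ) × (T → ℝ) be a nonempty set of feasible day-ahead decisions (pD, bD) and R ⊆ (S → ℝ) × (S → ℝ) a nonempty set of feasible real-time decisions (pR, bR). Define π̄_t := (1/N) · E[ Σ_{s ∈ S, τ(s) = t} π_s ], the joint objective F(pD, bD, pR, bR) := E[ Σ_{t ∈ T} λ_t (pD_t − bD_t) − Σ_{s ∈ S} c · pR_s + Σ_{s ∈ S} π_s ( pR_s − bR_s − (pD_{τ(s)} − bD_{τ(s)})/N ) ], the day-ahead objective F_D(pD, bD) := Σ_{t ∈ T} ( E[λ_t] − π̄_t ) (pD_t − bD_t), and the real-time objective F_R(pR, bR) := E[ Σ_{s ∈ S} π_s (pR_s − bR_s) ] − Σ_{s ∈ S} c · pR_s. Assume the image of F_D on D and the image of F_R on R are bounded above. Then sup over ((pD, bD), (pR, bR)) ∈ D × R of F equals ( sup over D of F_D ) + ( sup over R of F_R ). -/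

import Mathlib

/-!
The day-ahead position enters the real-time settlement only through the term
`∑ s, π_s (pD_{τ s} - bD_{τ s}) / N`, whose expectation, grouped over the fibres of `τ`,
is `∑ t, π̄_t (pD_t - bD_t)`. Since every price is integrable and the decisions are
deterministic, the expected joint objective therefore splits as `F (d, r) = F_D d + F_R r`,
and the supremum of a separable function over a product set is the sum of the two suprema.
-/

open MeasureTheory Finset

theorem csSup_image_prod_add {α β M : Type*} [ConditionallyCompleteLattice M] [AddGroup M]
    [AddLeftMono M] [AddRightMono M] {f : α → M} {g : β → M} {A : Set α} {B : Set β}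
    (hA : A.Nonempty) (hf : BddAbove (f '' A)) (hB : B.Nonempty) (hg : BddAbove (g '' B)) :
    sSup ((fun q : α × β => f q.1 + g q.2) '' A ×ˢ B) = sSup (f '' A) + sSup (g '' B) := by
  rw [← csSup_add (hA.image f) hf (hB.image g) hg, ← Set.image2_add, Set.image2_image_left,
    Set.image2_image_right]
  exact congrArg sSup (Set.image_prod fun a b => f a + g b)

theorem Finset.sum_mul_comp_div_eq_sum_fiberwise {S T K : Type*} [Fintype S] [Fintype T]
    [DecidableEq T] [Field K] (τ : S → T) (a : S → K) (x : T → K) (n : K) :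
    ∑ s, a s * (x (τ s) / n) = ∑ t, (1 / n * ∑ s ∈ univ.filter (fun s => τ s = t), a s) * x t := by
  rw [← sum_fiberwise univ τ]
  refine sum_congr rfl fun t _ => ?_
  rw [mul_sum, sum_mul]
  refine sum_congr rfl fun s hs => ?_
  rw [(mem_filter.mp hs).2]
  ring

section Expectation

variable {Ω ι : Type*} [MeasurableSpace Ω] {μ : Measure Ω} {X : ι → Ω → ℝ}

theorem integrable_sum_mul_const (s : Finset ι) (hX : ∀ i, Integrable (X i) μ) (w : ι → ℝ) :
    Integrable (fun ω => ∑ i ∈ s, X i ω * w i) μ :=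
  integrable_finsetSum _ fun i _ => (hX i).mul_const (w i)

theorem integral_sum_mul_const (s : Finset ι) (hX : ∀ i, Integrable (X i) μ) (w : ι → ℝ) :
    ∫ ω, ∑ i ∈ s, X i ω * w i ∂μ = ∑ i ∈ s, (∫ ω, X i ω ∂μ) * w i := by
  rw [integral_finsetSum _ fun i _ => (hX i).mul_const (w i)]
  simp only [integral_mul_const]

end Expectation

theorem two_stage_reformulation_general
    {Ω : Type*} [MeasurableSpace Ω] (μ : Measure Ω) [IsProbabilityMeasure μ]
    {T S : Type*} [Fintype T] [Fintype S] [DecidableEq T]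
    (τ : S → T) (N : ℕ)
    (lam : T → Ω → ℝ) (hlam : ∀ t, Integrable (lam t) μ)
    (π : S → Ω → ℝ) (hπ : ∀ s, Integrable (π s) μ)
    (c : ℝ)
    (D : Set ((T → ℝ) × (T → ℝ))) (R : Set ((S → ℝ) × (S → ℝ)))
    (hD : D.Nonempty) (hR : R.Nonempty)
    (piBar : T → ℝ)
    (hpiBar : ∀ t, piBar t
      = (1 / (N : ℝ)) * ∫ ω, (∑ s ∈ Finset.univ.filter (fun s => τ s = t), π s ω) ∂μ)
    (F : ((T → ℝ) × (T → ℝ)) → ((S → ℝ) × (S → ℝ)) → ℝ)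
    (hF : ∀ d r, F d r
      = ∫ ω, (∑ t : T, lam t ω * (d.1 t - d.2 t)
          - ∑ s : S, c * r.1 s
          + ∑ s : S, π s ω * (r.1 s - r.2 s - (d.1 (τ s) - d.2 (τ s)) / (N : ℝ))) ∂μ)
    (FD : ((T → ℝ) × (T → ℝ)) → ℝ)
    (hFD : ∀ d, FD d = ∑ t : T, ((∫ ω, lam t ω ∂μ) - piBar t) * (d.1 t - d.2 t))
    (FR : ((S → ℝ) × (S → ℝ)) → ℝ)
    (hFR : ∀ r, FR r
      = (∫ ω, ∑ s : S, π s ω * (r.1 s - r.2 s) ∂μ) - ∑ s : S, c * r.1 s)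
    (hbddD : BddAbove (FD '' D)) (hbddR : BddAbove (FR '' R)) :
    sSup ((fun q : ((T → ℝ) × (T → ℝ)) × ((S → ℝ) × (S → ℝ)) => F q.1 q.2) '' (D ×ˢ R))
      = sSup (FD '' D) + sSup (FR '' R) := by
  have hpiBar_sum (x : T → ℝ) :
      ∑ s, (∫ ω, π s ω ∂μ) * (x (τ s) / N) = ∑ t, piBar t * x t := by
    simp only [sum_mul_comp_div_eq_sum_fiberwise, hpiBar, integral_finsetSum _ fun s _ => hπ s]
  have hsplit (d r) : F d r = FD d + FR r := by
    rw [hF, hFD, hFR, integral_add (by fun_prop) (integrable_sum_mul_const _ hπ _),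
      integral_sub (integrable_sum_mul_const _ hlam _) (integrable_const _), integral_const,
      integral_sum_mul_const _ hlam, integral_sum_mul_const _ hπ, integral_sum_mul_const _ hπ]
    have hsettle : ∑ s, (∫ ω, π s ω ∂μ) * (r.1 s - r.2 s - (d.1 (τ s) - d.2 (τ s)) / N)
        = ∑ s, (∫ ω, π s ω ∂μ) * (r.1 s - r.2 s) - ∑ t, piBar t * (d.1 t - d.2 t) := by
      rw [← hpiBar_sum, ← sum_sub_distrib]
      exact sum_congr rfl fun s _ => mul_sub _ _ _
    rw [hsettle, probReal_univ, one_smul]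
    simp only [sub_mul, sum_sub_distrib]
    ring
  simp only [hsplit]
  exact csSup_image_prod_add hD hbddD hR hbddR

/-- Proposition 2 (two-stage reformulation): under the price-taker assumption
and with a product feasible set `D ×ˢ R`, the two-settlement storage arbitrage
problem separates into a day-ahead bidding problem with bidding cost equal to
the expected hourly average real-time price and a real-time arbitrage problem
that ignores day-ahead results. -/
theorem two_stage_reformulation
    {Ω : Type*} [MeasurableSpace Ω] (μ : Measure Ω) [IsProbabilityMeasure μ]
    {T S : Type*} [Fintype T] [Fintype S] [DecidableEq T]
    (τ : S → T) (N : ℕ) (hN : 0 < N)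
    (hfiber : ∀ t : T, (Finset.univ.filter (fun s => τ s = t)).card = N)
    (lam : T → Ω → ℝ) (hlam : ∀ t, Integrable (lam t) μ)
    (π : S → Ω → ℝ) (hπ : ∀ s, Integrable (π s) μ)
    (c : ℝ)
    (D : Set ((T → ℝ) × (T → ℝ))) (R : Set ((S → ℝ) × (S → ℝ)))
    (hD : D.Nonempty) (hR : R.Nonempty)
    (piBar : T → ℝ)
    (hpiBar : ∀ t, piBar t
      = (1 / (N : ℝ)) * ∫ ω, (∑ s ∈ Finset.univ.filter (fun s => τ s = t), π s ω) ∂μ)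
    (F : ((T → ℝ) × (T → ℝ)) → ((S → ℝ) × (S → ℝ)) → ℝ)
    (hF : ∀ d r, F d r
      = ∫ ω, (∑ t : T, lam t ω * (d.1 t - d.2 t)
          - ∑ s : S, c * r.1 s
          + ∑ s : S, π s ω * (r.1 s - r.2 s - (d.1 (τ s) - d.2 (τ s)) / (N : ℝ))) ∂μ)
    (FD : ((T → ℝ) × (T → ℝ)) → ℝ)
    (hFD : ∀ d, FD d = ∑ t : T, ((∫ ω, lam t ω ∂μ) - piBar t) * (d.1 t - d.2 t))
    (FR : ((S → ℝ) × (S → ℝ)) → ℝ)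
    (hFR : ∀ r, FR r
      = (∫ ω, ∑ s : S, π s ω * (r.1 s - r.2 s) ∂μ) - ∑ s : S, c * r.1 s)
    (hbddD : BddAbove (FD '' D)) (hbddR : BddAbove (FR '' R)) :
    sSup ((fun q : ((T → ℝ) × (T → ℝ)) × ((S → ℝ) × (S → ℝ)) => F q.1 q.2) '' (D ×ˢ R))
      = sSup (FD '' D) + sSup (FR '' R) :=
  two_stage_reformulation_general μ τ N lam hlam π hπ c D R hD hR piBar hpiBar F hF FD hFD FR hFR
    hbddD hbddR
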